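/- arXiv:1909.00631 — 2 statements merged into one kernel-verified Lean document; each statement's English description precedes it below -/
import Mathlib

section
/- Under the deterministic training sequence where the chips in each ambient symbol block sum to zero, the correlator output of the composite received signal a·s(t)c(t) + b·s(t) (desired plus direct-link ambient) against c(t) equals a·(1/N_s)Σ_i s_i; i.e., the ambient contribution b·s(t) is completely eliminated. -/
/-!
With `T_s = m T_c` the integrand is a step function of the chip index `n = ⌊t / T_c⌋`, the symbol
index being `n / m`, so the correlator is the average of its chip values. Since `c_n² = 1`, the
chip value is `a s_{n/m} + b s_{n/m} c_n`; summed over a symbol block, the first term gives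
`m a s_i` and the second vanishes because the chips of the block sum to zero.
-/

open MeasureTheory Finset

lemma eqOn_natFloor_uIoo {α : Type*} (g : ℕ → α) (k : ℕ) :
    Set.EqOn (fun u : ℝ => g ⌊u⌋₊) (fun _ => g k) (Set.uIoo (k : ℝ) (k + 1)) := by
  intro u hu
  rw [Set.uIoo_of_le (by linarith)] at hu
  simp only [Nat.floor_eq_on_Ico k u ⟨hu.1.le, hu.2⟩]

section StepIntegral

variable {E : Type*} [NormedAddCommGroup E] [NormedSpace ℝ E] [CompleteSpace E]

lemma integral_natFloor (g : ℕ → E) (N : ℕ) :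
    ∫ u in (0 : ℝ)..N, g ⌊u⌋₊ = ∑ n ∈ range N, g n := by
  have hstep : ∀ k : ℕ, ∫ u in (k : ℝ)..(k + 1 : ℕ), g ⌊u⌋₊ = g k := by
    intro k
    rw [Nat.cast_succ, intervalIntegral.integral_congr_uIoo (eqOn_natFloor_uIoo g k),
      intervalIntegral.integral_const, add_sub_cancel_left, one_smul]
  have hint : ∀ k < N, IntervalIntegrable (fun u : ℝ => g ⌊u⌋₊) volume k (k + 1 : ℕ) := by
    intro k _
    rw [Nat.cast_succ]
    exact intervalIntegrable_const.congr_uIoo (eqOn_natFloor_uIoo g k).symm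
  rw [← sum_congr rfl fun k _ => hstep k, intervalIntegral.sum_integral_adjacent_intervals hint,
    Nat.cast_zero]

lemma integral_natFloor_div (g : ℕ → E) (N : ℕ) (T : ℝ) :
    ∫ t in (0 : ℝ)..N * T, g ⌊t / T⌋₊ = T • ∑ n ∈ range N, g n := by
  rcases eq_or_ne T 0 with rfl | hT
  · simp
  rw [intervalIntegral.integral_comp_div (fun u => g ⌊u⌋₊) hT, zero_div,
    mul_div_cancel_right₀ _ hT, integral_natFloor]

end StepIntegral

section BlockSums

variable {M : Type*} [AddCommMonoid M]

lemma sum_range_mul_eq_sum_Ico_blocks (F : ℕ → M) (m N : ℕ) :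
    ∑ n ∈ range (m * N), F n = ∑ i ∈ range N, ∑ n ∈ Ico (m * i) (m * (i + 1)), F n := by
  induction N with
  | zero => simp
  | succ N ih =>
    rw [sum_range_succ, ← ih, range_eq_Ico, range_eq_Ico,
      sum_Ico_consecutive F (Nat.zero_le _) (Nat.mul_le_mul_left m N.le_succ)]

lemma div_eq_of_mem_Ico_mul {m i n : ℕ} (hn : n ∈ Ico (m * i) (m * (i + 1))) : n / m = i := by
  rw [mem_Ico] at hn
  exact Nat.div_eq_of_lt_le (by rw [mul_comm]; exact hn.1) (by rw [mul_comm]; exact hn.2)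

lemma sum_range_mul_comp_div (x : ℕ → M) (m N : ℕ) :
    ∑ n ∈ range (m * N), x (n / m) = m • ∑ i ∈ range N, x i := by
  rw [sum_range_mul_eq_sum_Ico_blocks, smul_sum]
  refine sum_congr rfl fun i _ => ?_
  rw [sum_congr rfl fun n hn => congrArg x (div_eq_of_mem_Ico_mul hn), sum_const, Nat.card_Ico,
    ← Nat.mul_sub, Nat.add_sub_cancel_left, mul_one]

end BlockSums

lemma sum_range_mul_comp_div_mul_eq_zero {R : Type*} [NonUnitalNonAssocSemiring R]
    (x c : ℕ → R) (m N : ℕ) (hc : ∀ i < N, ∑ n ∈ Ico (m * i) (m * (i + 1)), c n = 0) :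
    ∑ n ∈ range (m * N), x (n / m) * c n = 0 := by
  rw [sum_range_mul_eq_sum_Ico_blocks]
  refine sum_eq_zero fun i hi => ?_
  rw [sum_congr rfl fun n hn => congrArg (· * c n) (congrArg x (div_eq_of_mem_Ico_mul hn)),
    ← mul_sum, hc i (mem_range.mp hi), mul_zero]

theorem stmt_7_general (T_s T_c : ℝ) (hTc : 0 < T_c)
    (N_s N_c : ℕ) (hNs : 0 < N_s) (hNc : 0 < N_c) (hdvd : N_s ∣ N_c)
    (hrel : (N_c : ℝ) * T_c = (N_s : ℝ) * T_s)
    (sv : ℕ → ℂ) (cv : ℕ → ℤ) (hcv : ∀ n < N_c, cv n = 1 ∨ cv n = -1)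
    (hzero : ∀ i < N_s,
      ∑ n ∈ Finset.Ico ((N_c / N_s) * i) ((N_c / N_s) * (i + 1)), cv n = 0)
    (a b : ℂ) :
    (1 / ((N_c : ℂ) * (T_c : ℂ))) * ∫ t in (0:ℝ)..((N_c : ℝ) * T_c),
        (a * sv (⌊t / T_s⌋.toNat) * ((cv (⌊t / T_c⌋.toNat) : ℂ))
          + b * sv (⌊t / T_s⌋.toNat)) * ((cv (⌊t / T_c⌋.toNat) : ℂ))
      = a * ((1 / (N_s : ℂ)) * ∑ i ∈ Finset.range N_s, sv i) := by
  obtain ⟨m, rfl⟩ := hdvd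
  rw [Nat.mul_div_cancel_left m hNs] at hzero
  have hTs : T_s = m * T_c := by
    refine mul_left_cancel₀ (Nat.cast_ne_zero.mpr hNs.ne') ?_
    rw [← hrel]; push_cast; ring
  have hsymbol : ∀ t : ℝ, ⌊t / T_s⌋.toNat = ⌊t / T_c⌋₊ / m := by
    intro t
    rw [Int.floor_toNat, hTs, div_mul_eq_div_div_swap, Nat.floor_div_natCast]
  have hchip : ∀ n ∈ range (N_s * m),
      (a * sv (n / m) * cv n + b * sv (n / m)) * cv n
        = a * sv (n / m) + b * (sv (n / m) * cv n) := by
    intro n hn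
    have hsq : (cv n : ℂ) * cv n = 1 := by
      rcases hcv n (mem_range.mp hn) with h | h <;> simp [h]
    linear_combination a * sv (n / m) * hsq
  have hzero' : ∀ i < N_s, ∑ n ∈ Ico (m * i) (m * (i + 1)), (cv n : ℂ) = 0 :=
    fun i hi => mod_cast hzero i hi
  simp only [hsymbol, Int.floor_toNat]
  rw [integral_natFloor_div (fun n => (a * sv (n / m) * cv n + b * sv (n / m)) * cv n),
    sum_congr rfl hchip, sum_add_distrib, ← mul_sum, ← mul_sum, Nat.mul_comm N_s,
    sum_range_mul_comp_div, sum_range_mul_comp_div_mul_eq_zero _ _ _ _ hzero', mul_zero,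
    add_zero, Complex.real_smul, nsmul_eq_mul]
  have hm : (m : ℂ) ≠ 0 := Nat.cast_ne_zero.mpr (Nat.pos_of_mul_pos_left hNc).ne'
  have hT : (T_c : ℂ) ≠ 0 := Complex.ofReal_ne_zero.mpr hTc.ne'
  push_cast
  field_simp

theorem stmt_7 (T_s T_c : ℝ) (hTs : 0 < T_s) (hTc : 0 < T_c)
    (N_s N_c : ℕ) (hNs : 0 < N_s) (hNc : 0 < N_c) (hdvd : N_s ∣ N_c)
    (hrel : (N_c : ℝ) * T_c = (N_s : ℝ) * T_s)
    (sv : ℕ → ℂ) (cv : ℕ → ℤ) (hcv : ∀ n < N_c, cv n = 1 ∨ cv n = -1)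
    (hzero : ∀ i < N_s,
      ∑ n ∈ Finset.Ico ((N_c / N_s) * i) ((N_c / N_s) * (i + 1)), cv n = 0)
    (a b : ℂ) :
    (1 / ((N_c : ℂ) * (T_c : ℂ))) * ∫ t in (0:ℝ)..((N_c : ℝ) * T_c),
        (a * sv (⌊t / T_s⌋.toNat) * ((cv (⌊t / T_c⌋.toNat) : ℂ))
          + b * sv (⌊t / T_s⌋.toNat)) * ((cv (⌊t / T_c⌋.toNat) : ℂ))
      = a * ((1 / (N_s : ℂ)) * ∑ i ∈ Finset.range N_s, sv i) :=
  stmt_7_general T_s T_c hTc N_s N_c hNs hNc hdvd hrel sv cv hcv hzero a b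
end

section
/- For the misaligned correlator with any offset T_off ∈ [0, T_c) and the alternating training sequence with an even number of chips per ambient symbol, the undesired ambient component vanishes: (1/(N_c T_c)) ∫_0^{N_c T_c} s(t)·c(t - T_off) dt = 0, where c is extended by the same alternating pattern before time 0. -/
/-!
The chip waveform `t ↦ (-1) ^ ⌊(t - τ) / T⌋` is `2T`-periodic and takes the values `1` and `-1`
on the two halves of each period, so it integrates to zero over any interval whose length is a
multiple of `2T`, wherever that interval starts. An ambient symbol lasts `2mT`, so on each
symbol the integrand is a constant times the chip waveform over `m` whole periods, and every
symbol contributes zero.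
-/

open MeasureTheory intervalIntegral Set Function

section StepModulation

variable {𝕜 : Type*} [RCLike 𝕜] {P : ℝ}

lemma floor_div_toNat_eq_of_mem_Ico (hP : 0 < P) {k : ℕ} {t : ℝ}
    (ht : t ∈ Ico (k * P) ((k + 1) * P)) : ⌊t / P⌋.toNat = k := by
  have hfloor : ⌊t / P⌋ = k := by
    rw [Int.floor_eq_iff, le_div_iff₀ hP, div_lt_iff₀ hP]
    exact_mod_cast ht
  simp [hfloor]

lemma integral_step_mul_eq_zero (hP : 0 < P) (s : ℕ → 𝕜) {f : ℝ → 𝕜}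
    (hf : ∀ a b, IntervalIntegrable f volume a b)
    (hf_zero : ∀ k : ℕ, ∫ t in k * P..(k + 1) * P, f t = 0) (n : ℕ) :
    ∫ t in 0..n * P, s ⌊t / P⌋.toNat * f t = 0 := by
  have hle (k : ℕ) : (k : ℝ) * P ≤ (k + 1) * P := by nlinarith
  have heq (k : ℕ) : EqOn (fun t => s k * f t) (fun t => s ⌊t / P⌋.toNat * f t)
      (Ioo (k * P) ((k + 1) * P)) := fun t ht => by
    simp only [floor_div_toNat_eq_of_mem_Ico hP (Ioo_subset_Ico_self ht)]
  have hint (k : ℕ) : IntervalIntegrable (fun t => s ⌊t / P⌋.toNat * f t) volume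
      (k * P) ((k + 1) * P) :=
    ((hf _ _).const_mul (s k)).congr_uIoo (uIoo_of_le (hle k) ▸ heq k)
  have hsum := sum_integral_adjacent_intervals (a := fun k : ℕ => (k : ℝ) * P) (n := n)
    fun k _ => by exact_mod_cast hint k
  simp only [Nat.cast_zero, zero_mul] at hsum
  rw [← hsum]
  refine Finset.sum_eq_zero fun k _ => ?_
  push_cast
  rw [← integral_congr_Ioo_of_le (hle k) (heq k), intervalIntegral.integral_const_mul, hf_zero, mul_zero]

end StepModulation

lemma Function.Periodic.intervalIntegral_add_nat_mul_eq_zero {E : Type*} [NormedAddCommGroup E]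
    [NormedSpace ℝ E] {g : ℝ → E} {p : ℝ} (hg : Periodic g p)
    (hint : ∀ a b, IntervalIntegrable g volume a b) (hzero : ∀ a, ∫ t in a..a + p, g t = 0)
    (n : ℕ) (a : ℝ) : ∫ t in a..a + n * p, g t = 0 := by
  have h := hg.intervalIntegral_add_zsmul_eq n a hint
  rw [hzero, smul_zero, zsmul_eq_mul, Int.cast_natCast] at h
  exact h

noncomputable def squareWave (T τ t : ℝ) : ℝ := (-1) ^ ⌊(t - τ) / T⌋

namespace squareWave

variable {T : ℝ} (τ : ℝ)

lemma periodic (hT : T ≠ 0) : Periodic (squareWave T τ) (2 * T) := fun t => by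
  have hshift : (t + 2 * T - τ) / T = (t - τ) / T + (2 : ℤ) := by
    field_simp
    push_cast
    ring
  simp only [squareWave, hshift, Int.floor_add_intCast]
  rw [zpow_add₀ (by norm_num), zpow_two, neg_one_mul, neg_neg, mul_one]

lemma abs_eq_one (t : ℝ) : |squareWave T τ t| = 1 := by
  simp [squareWave]

lemma measurable : Measurable (squareWave T τ) :=
  measurable_from_top.comp ((measurable_id.sub_const τ).div_const T).floor

lemma intervalIntegrable (a b : ℝ) : IntervalIntegrable (squareWave T τ) volume a b := by
  refine (intervalIntegrable_const (c := (1 : ℝ))).mono_fun'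
    (measurable τ).aestronglyMeasurable (Filter.Eventually.of_forall fun t => ?_)
  exact (Real.norm_eq_abs _).trans_le (abs_eq_one τ t).le

lemma eqOn_one (hT : 0 < T) : EqOn (squareWave T τ) (fun _ => 1) (Ioo τ (τ + T)) :=
  fun t ht => by
    have hfloor : ⌊(t - τ) / T⌋ = 0 := by
      rw [Int.floor_eq_iff, le_div_iff₀ hT, div_lt_iff₀ hT]
      constructor <;> push_cast <;> linarith [ht.1, ht.2]
    simp [squareWave, hfloor]

lemma eqOn_neg_one (hT : 0 < T) :
    EqOn (squareWave T τ) (fun _ => -1) (Ioo (τ + T) (τ + T + T)) := fun t ht => by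
  have hfloor : ⌊(t - τ) / T⌋ = 1 := by
    rw [Int.floor_eq_iff, le_div_iff₀ hT, div_lt_iff₀ hT]
    constructor <;> push_cast <;> linarith [ht.1, ht.2]
  simp [squareWave, hfloor]

lemma integral_period_eq_zero (hT : 0 < T) (a : ℝ) :
    ∫ t in a..a + 2 * T, squareWave T τ t = 0 := by
  rw [(periodic τ hT.ne').intervalIntegral_add_eq a τ, two_mul, ← add_assoc,
    ← integral_add_adjacent_intervals (intervalIntegrable τ _ _) (intervalIntegrable τ _ _),
    integral_congr_Ioo_of_le (by linarith) (eqOn_one τ hT),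
    integral_congr_Ioo_of_le (by linarith) (eqOn_neg_one τ hT)]
  simp

end squareWave

theorem stmt_14_general (T_c T_off : ℝ) (hTc : 0 < T_c)
    (m N_s : ℕ) (hm : 1 ≤ m) (N_c : ℕ) (hNc : N_c = 2 * m * N_s)
    (sv : ℕ → ℂ) :
    (1 / ((N_c : ℂ) * (T_c : ℂ))) * ∫ t in (0:ℝ)..((N_c : ℝ) * T_c),
        sv (⌊t / (2 * m * T_c)⌋.toNat)
          * ((((-1 : ℝ) ^ (⌊(t - T_off) / T_c⌋)) : ℝ) : ℂ) = 0 := by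
  set P : ℝ := 2 * m * T_c
  have hP : 0 < P := by
    have : (0 : ℝ) < m := by exact_mod_cast hm
    positivity
  have hlength : (N_c : ℝ) * T_c = N_s * P := by
    rw [hNc]
    push_cast
    ring
  have hchip : ∀ a b, IntervalIntegrable (fun t => (squareWave T_c T_off t : ℂ)) volume a b :=
    fun a b => have h := squareWave.intervalIntegrable (T := T_c) T_off a b; ⟨h.1.ofReal, h.2.ofReal⟩
  have hsymbol (k : ℕ) : ∫ t in k * P..(k + 1) * P, (squareWave T_c T_off t : ℂ) = 0 := by
    rw [intervalIntegral.integral_ofReal, show ((k : ℝ) + 1) * P = k * P + m * (2 * T_c) by ring,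
      (squareWave.periodic T_off hTc.ne').intervalIntegral_add_nat_mul_eq_zero
        (squareWave.intervalIntegrable T_off) (squareWave.integral_period_eq_zero T_off hTc),
      Complex.ofReal_zero]
  rw [hlength]
  exact mul_eq_zero_of_right _ (integral_step_mul_eq_zero hP sv hchip hsymbol N_s)

theorem stmt_14 (T_c T_off : ℝ) (hTc : 0 < T_c) (hoff : T_off ∈ Set.Ico 0 T_c)
    (m N_s : ℕ) (hm : 1 ≤ m) (hNs : 0 < N_s) (N_c : ℕ) (hNc : N_c = 2 * m * N_s)
    (sv : ℕ → ℂ) :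
    (1 / ((N_c : ℂ) * (T_c : ℂ))) * ∫ t in (0:ℝ)..((N_c : ℝ) * T_c),
        sv (⌊t / (2 * m * T_c)⌋.toNat)
          * ((((-1 : ℝ) ^ (⌊(t - T_off) / T_c⌋)) : ℝ) : ℂ) = 0 :=
  stmt_14_general T_c T_off hTc m N_s hm N_c hNc sv
end
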